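/- arXiv:1603.08117 — 3 statements merged into one kernel-verified Lean document; each statement's English description precedes it below -/
import Mathlib

section
/- The interval topology T_≺ induced on Minkowski space M = ℝ⁴ by the causal order ≺ is not equal to the Zeeman topology Z (part of Theorem 2 of the paper). -/
open Set Metric TopologicalSpace

noncomputable section

/-- Minkowski space `M = ℝ⁴` with the Euclidean metric/topology. -/
abbrev M4 : Type := EuclideanSpace ℝ (Fin 4)

/-- The Minkowski quadratic form `Q(x) = x₀² − x₁² − x₂² − x₃²`. -/
def Q (x : M4) : ℝ := x 0 ^ 2 - x 1 ^ 2 - x 2 ^ 2 - x 3 ^ 2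

/-- Chronological order: `x ≪ y`. -/
def chron (x y : M4) : Prop := Q (y - x) > 0 ∧ x 0 < y 0

/-- Causal order: `x ≺ y`. -/
def causal (x y : M4) : Prop := Q (y - x) ≥ 0 ∧ x 0 ≤ y 0

/-- Horismos: `x → y`. -/
def horismos (x y : M4) : Prop := Q (y - x) = 0 ∧ x ≠ y ∧ x 0 < y 0

/-- The light cone `N(x) = N⁺(x) ∪ N⁻(x)`. -/
def lightCone (x : M4) : Set M4 := {y | horismos x y} ∪ {y | horismos y x}

/-- The Zeeman topology `Z`, generated by the sets `Z_ε(x) = (B_ε(x) \ N(x)) ∪ {x}`. -/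
def Zeeman : TopologicalSpace M4 :=
  TopologicalSpace.generateFrom
    {S | ∃ (x : M4) (ε : ℝ), 0 < ε ∧ S = (Metric.ball x ε \ lightCone x) ∪ {x}}

/-- The interval topology `T_R` of a relation `R`, generated by the subbasis of
complements of the sets `R⁺(x) = {y | R x y}` and `R⁻(x) = {y | R y x}`. -/
def intervalTopology (R : M4 → M4 → Prop) : TopologicalSpace M4 :=
  TopologicalSpace.generateFrom
    ({S | ∃ x : M4, S = {y | R x y}ᶜ} ∪ {S | ∃ x : M4, S = {y | R y x}ᶜ})
lemma contCoord (i : Fin 4) : Continuous fun y : M4 => y i :=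
  (EuclideanSpace.proj i).continuous

lemma contQ : Continuous Q := by
  unfold Q; fun_prop

lemma causal_plus_closed (x : M4) : IsClosed {y : M4 | causal x y} := by
  have h : {y : M4 | causal x y}
      = {y : M4 | 0 ≤ Q (y - x)} ∩ {y : M4 | x 0 ≤ y 0} := by
    ext y; simp [causal, ge_iff_le]
  rw [h]
  exact (isClosed_le continuous_const
      (contQ.comp (continuous_id.sub continuous_const))).inter
    (isClosed_le continuous_const (contCoord 0))

lemma causal_minus_closed (x : M4) : IsClosed {y : M4 | causal y x} := by
  have h : {y : M4 | causal y x}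
      = {y : M4 | 0 ≤ Q (x - y)} ∩ {y : M4 | y 0 ≤ x 0} := by
    ext y; simp [causal, ge_iff_le]
  rw [h]
  exact (isClosed_le continuous_const
      (contQ.comp (continuous_const.sub continuous_id))).inter
    (isClosed_le (contCoord 0) continuous_const)

/-- The interval topology from the causal order is not the Zeeman topology. -/
theorem interval_topology_causal_ne_Zeeman :
    intervalTopology causal ≠ Zeeman := by
  intro h
  -- the Euclidean topology is finer than the interval topology
  have hle : (inferInstance : TopologicalSpace M4) ≤ intervalTopology causal := by
    apply le_generateFrom
    rintro S (⟨x, rfl⟩ | ⟨x, rfl⟩)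
    · exact (causal_plus_closed x).isOpen_compl
    · exact (causal_minus_closed x).isOpen_compl
  set U : Set M4 := (Metric.ball 0 1 \ lightCone 0) ∪ {0} with hUdef
  have hUZ : Zeeman.IsOpen U :=
    TopologicalSpace.isOpen_generateFrom_of_mem ⟨0, 1, one_pos, rfl⟩
  have hU : IsOpen U := hle U (h ▸ hUZ)
  have h0 : (0 : M4) ∈ U := Or.inr rfl
  rcases Metric.isOpen_iff.mp hU 0 h0 with ⟨δ, hδ, hball⟩
  set p : M4 := (WithLp.equiv 2 (Fin 4 → ℝ)).symm ![δ/2, δ/2, 0, 0] with hp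
  have hp0 : p 0 = δ/2 := rfl
  have hp1 : p 1 = δ/2 := rfl
  have hp2 : p 2 = 0 := rfl
  have hp3 : p 3 = 0 := rfl
  have hz0 : (0 : M4) 0 = 0 := rfl
  have hpb : p ∈ Metric.ball (0 : M4) δ := by
    rw [Metric.mem_ball, dist_zero_right, EuclideanSpace.norm_eq]
    rw [Fin.sum_univ_four, hp0, hp1, hp2, hp3]
    rw [Real.sqrt_lt' hδ]
    have : ‖δ/2‖ = δ/2 := by rw [Real.norm_eq_abs, abs_of_pos (by linarith)]
    rw [this]
    simp only [norm_zero]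
    nlinarith
  have hpU := hball hpb
  have hpne : p ≠ 0 := by
    intro hcon
    have := congrArg (fun z : M4 => z 0) hcon
    simp only [hp0, hz0] at this
    linarith
  have hQ : Q (p - 0) = 0 := by
    rw [sub_zero]
    show p 0 ^ 2 - p 1 ^ 2 - p 2 ^ 2 - p 3 ^ 2 = 0
    rw [hp0, hp1, hp2, hp3]; ring
  have hpl : p ∈ lightCone 0 :=
    Or.inl ⟨hQ, fun hcon => hpne hcon.symm, by rw [hz0, hp0]; linarith⟩
  rcases hpU with hmem | hmem
  · exact hmem.2 hpl
  · exact hpne hmem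
end
end

section
/- In Minkowski space M = ℝ⁴, the relation 'causally related through horismos' coincides with the chronological order: x ≪ᵁ y if and only if x ≪ y. -/
open Set Metric TopologicalSpace

noncomputable section

/-- `x ≪ᵁ y` iff `x ≺ᵁ y` and not `x → y`. -/
def chronThroughHorismos (x y : M4) : Prop :=
  Relation.TransGen horismos x y ∧ ¬ horismos x y

/-!
A chain of horismos steps is a sum of future null vectors, and by the reverse Cauchy–Schwarz
inequality a sum of future causal vectors is future causal; so `x ≺ᵁ y` gives `Q (y - x) ≥ 0`
with `x₀ < y₀`, and excluding `x → y` leaves `Q (y - x) > 0`. Conversely, every future timelike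
vector `u` is the sum of two future null vectors `t (1, 1, 0, 0)` and `u - t (1, 1, 0, 0)`,
since `Q (u - t (1, 1, 0, 0)) = Q u - 2 t (u₀ - u₁)` is affine in `t` and `u₁ < u₀`.
-/

lemma horismos_iff {x y : M4} : horismos x y ↔ Q (y - x) = 0 ∧ x 0 < y 0 :=
  ⟨fun h => ⟨h.1, h.2.2⟩, fun h => ⟨h.1, fun hxy => (hxy ▸ h.2).false, h.2⟩⟩

lemma Q_add_nonneg {a b : M4} (ha : 0 ≤ Q a) (hb : 0 ≤ Q b) (ha₀ : 0 ≤ a 0) (hb₀ : 0 ≤ b 0) :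
    0 ≤ Q (a + b) := by
  simp only [Q, PiLp.add_apply] at *
  nlinarith [sq_nonneg (a 1 * b 2 - a 2 * b 1), sq_nonneg (a 1 * b 3 - a 3 * b 1),
    sq_nonneg (a 2 * b 3 - a 3 * b 2), mul_nonneg ha₀ hb₀,
    sq_nonneg (a 0 * b 0 - a 1 * b 1 - a 2 * b 2 - a 3 * b 3),
    sq_nonneg (a 0 * b 0 + a 1 * b 1 + a 2 * b 2 + a 3 * b 3)]

lemma transGen_horismos_causal {x y : M4} (h : Relation.TransGen horismos x y) :
    0 ≤ Q (y - x) ∧ x 0 < y 0 := by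
  induction h with
  | single hxy => exact ⟨hxy.1.ge, hxy.2.2⟩
  | @tail b c _ hbc ih =>
    have hsplit : c - x = (b - x) + (c - b) := by abel
    refine ⟨hsplit ▸ Q_add_nonneg ih.1 hbc.1.ge ?_ ?_, ih.2.trans hbc.2.2⟩ <;>
      simp only [PiLp.sub_apply, sub_nonneg]
    exacts [ih.2.le, hbc.2.2.le]

lemma chron_of_transGen_horismos {x y : M4} (h : Relation.TransGen horismos x y)
    (hxy : ¬ horismos x y) : chron x y := by
  obtain ⟨hQ, h₀⟩ := transGen_horismos_causal h
  exact ⟨hQ.lt_of_ne fun hQ₀ => hxy (horismos_iff.2 ⟨hQ₀.symm, h₀⟩), h₀⟩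

lemma exists_null_add_null_of_timelike {u : M4} (hQ : 0 < Q u) (hu₀ : 0 < u 0) :
    ∃ ℓ : M4, Q ℓ = 0 ∧ Q (u - ℓ) = 0 ∧ 0 < ℓ 0 ∧ ℓ 0 < u 0 := by
  have hu₁ : u 1 < u 0 := by
    simp only [Q] at hQ
    nlinarith [sq_nonneg (u 2), sq_nonneg (u 3)]
  set t := Q u / (2 * (u 0 - u 1))
  have ht_pos : 0 < t := div_pos hQ (by linarith)
  have ht : t * (2 * (u 0 - u 1)) = Q u := div_mul_cancel₀ _ (by linarith)
  simp only [Q] at ht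
  refine ⟨WithLp.toLp 2 ![t, t, 0, 0], ?_, ?_, ht_pos, ?_⟩
  · simp [Q]
  · simp only [Q, PiLp.sub_apply, Matrix.cons_val_zero, Matrix.cons_val_one, Matrix.cons_val,
      sub_zero]
    linear_combination -ht
  · simp only [Matrix.cons_val_zero]
    nlinarith [sq_nonneg (u 2), sq_nonneg (u 3)]

lemma exists_horismos_horismos_of_chron {x y : M4} (h : chron x y) :
    ∃ z, horismos x z ∧ horismos z y := by
  obtain ⟨ℓ, hℓ, hrest, hℓ₀, hℓu⟩ :=
    exists_null_add_null_of_timelike h.1 (sub_pos.2 h.2)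
  simp only [PiLp.sub_apply] at hℓu
  refine ⟨x + ℓ, horismos_iff.2 ⟨?_, ?_⟩, horismos_iff.2 ⟨?_, ?_⟩⟩
  · rwa [add_sub_cancel_left]
  · simpa only [PiLp.add_apply, lt_add_iff_pos_right] using hℓ₀
  · rwa [← sub_sub]
  · simp only [PiLp.add_apply]
    linarith

/-- The relation "causally related through horismos" coincides with chronology. -/
theorem chronThroughHorismos_iff_chron :
    ∀ x y : M4, chronThroughHorismos x y ↔ chron x y := by
  intro x y
  refine ⟨fun ⟨h, hxy⟩ => chron_of_transGen_horismos h hxy, fun h => ⟨?_, fun hxy => ?_⟩⟩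
  · obtain ⟨z, hxz, hzy⟩ := exists_horismos_horismos_of_chron h
    exact .tail (.single hxz) hzy
  · exact h.1.ne' hxy.1
end
end

section
/- The Zeeman topology Z induces the 1-dimensional Euclidean topology on every time axis: for every x ∈ M and every timelike vector v (i.e., Q(v) > 0), the subspace topology induced by Z on the line L = {x + t·v : t ∈ ℝ} coincides with the subspace topology induced on L by the standard Euclidean topology E of ℝ⁴. -/
open Set Metric TopologicalSpace

noncomputable section

/-- Expansion of `Q` along a line. -/
lemma Q_line_expand (u v : M4) (t : ℝ) :
    Q (u + t • v) = Q v * t ^ 2 + (2*(u 0*v 0 - u 1*v 1 - u 2*v 2 - u 3*v 3)) * t + Q u := by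
  simp [Q, PiLp.add_apply, PiLp.smul_apply, smul_eq_mul]
  ring

lemma Q_neg (u : M4) : Q (-u) = Q u := by simp [Q]

lemma quad_roots_finite (a b c : ℝ) (ha : a ≠ 0) : {t : ℝ | a*t^2+b*t+c = 0}.Finite := by
  have hp : (Polynomial.C a * Polynomial.X^2 + Polynomial.C b * Polynomial.X + Polynomial.C c) ≠ 0 := by
    intro h
    have := congrArg (Polynomial.coeff · 2) h
    simp [Polynomial.coeff_add, Polynomial.coeff_C] at this
    exact ha this
  refine (Polynomial.finite_setOf_isRoot hp).subset ?_
  intro t ht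
  simp [Polynomial.IsRoot] at *
  linarith [ht]

lemma not_mem_lightCone_self (w : M4) : w ∉ lightCone w := by
  simp [lightCone, horismos]

/-- The Zeeman topology induces the 1-dimensional Euclidean topology on every time
axis `L = {x + t·v : t ∈ ℝ}` with `v` timelike. -/
theorem Zeeman_induces_euclidean_on_time_axis (x v : M4) (hv : Q v > 0) :
    TopologicalSpace.induced
        (Subtype.val : {p : M4 // ∃ t : ℝ, p = x + t • v} → M4) Zeeman =
      TopologicalSpace.induced
        (Subtype.val : {p : M4 // ∃ t : ℝ, p = x + t • v} → M4)
        (inferInstance : TopologicalSpace M4) := by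
  classical
  set T := {p : M4 // ∃ t : ℝ, p = x + t • v} with hT
  have hinst : TopologicalSpace.induced (Subtype.val : T → M4)
      (inferInstance : TopologicalSpace M4) = (inferInstance : TopologicalSpace T) := rfl
  rw [hinst, Zeeman, induced_generateFrom_eq]
  -- the light cone of any point meets the line in a finite set
  have hfin : ∀ w : M4, ((Subtype.val : T → M4) ⁻¹' lightCone w).Finite := by
    intro w
    set b : ℝ := 2*((x-w) 0*v 0 - (x-w) 1*v 1 - (x-w) 2*v 2 - (x-w) 3*v 3) with hb
    have hroot : {t : ℝ | Q v * t^2 + b*t + Q (x-w) = 0}.Finite :=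
      quad_roots_finite _ _ _ (ne_of_gt hv)
    have himg : ((Subtype.val : T → M4) ⁻¹'
        ((fun t : ℝ => x + t • v) '' {t : ℝ | Q v * t^2 + b*t + Q (x-w) = 0})).Finite :=
      Set.Finite.preimage (Subtype.val_injective.injOn) (hroot.image _)
    refine himg.subset ?_
    intro p hp
    obtain ⟨t, ht⟩ := p.2
    have hq : Q (p.val - w) = 0 := by
      rcases hp with h | h
      · exact h.1
      · have h1 := h.1
        rw [show (w - p.val : M4) = -(p.val - w) by abel] at h1
        rwa [Q_neg] at h1
    have hsplit : (p.val - w : M4) = (x - w) + t • v := by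
      rw [ht]; abel
    rw [hsplit, Q_line_expand] at hq
    exact ⟨t, hq, ht.symm⟩
  -- preimage of a Zeeman basic set is a ball minus the (finite) light-cone trace
  have hkey : ∀ (w : M4) (ε : ℝ), 0 < ε →
      ((Subtype.val : T → M4) ⁻¹' ((Metric.ball w ε \ lightCone w) ∪ {w}))
        = Subtype.val ⁻¹' Metric.ball w ε \ Subtype.val ⁻¹' lightCone w := by
    intro w ε hε
    ext p
    simp only [mem_preimage, mem_union, mem_diff, mem_singleton_iff]
    constructor
    · rintro (⟨h1, h2⟩ | h)
      · exact ⟨h1, h2⟩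
      · exact ⟨by rw [h]; exact mem_ball_self hε,
          by rw [h]; exact not_mem_lightCone_self w⟩
    · exact fun h => Or.inl ⟨h.1, h.2⟩
  refine le_antisymm ?_ (le_generateFrom ?_)
  · -- every Euclidean-open set of the line is Zeeman-open
    rw [TopologicalSpace.le_def]
    intro U hU
    set C : Set (Set T) := {s | (s ∈ preimage (Subtype.val : T → M4) ''
        {S | ∃ (x : M4) (ε : ℝ), 0 < ε ∧ S = (Metric.ball x ε \ lightCone x) ∪ {x}}) ∧ s ⊆ U}
      with hC
    have hUeq : U = ⋃₀ C := by
      apply Set.Subset.antisymm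
      · intro p hp
        obtain ⟨ε, hε, hball⟩ := Metric.isOpen_iff.1 hU p hp
        have hballs : ((Subtype.val : T → M4) ⁻¹' Metric.ball p.val ε) = Metric.ball p ε := by
          ext q; simp [Metric.mem_ball, Subtype.dist_eq]
        refine ⟨(Subtype.val : T → M4) ⁻¹'
            ((Metric.ball p.val ε \ lightCone p.val) ∪ {p.val}), ⟨⟨_, ⟨p.val, ε, hε, rfl⟩, rfl⟩, ?_⟩, ?_⟩
        · rw [hkey p.val ε hε]
          exact fun q hq => hball (hballs ▸ hq.1)
        · rw [hkey p.val ε hε]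
          exact ⟨mem_ball_self hε, not_mem_lightCone_self p.val⟩
      · rintro p ⟨s, hs, hps⟩
        exact hs.2 hps
    rw [hUeq]
    exact TopologicalSpace.GenerateOpen.sUnion _ (fun s hs => .basic s hs.1)
  · -- every Zeeman basic set of the line is Euclidean-open
    rintro s ⟨S, ⟨w, ε, hε, rfl⟩, rfl⟩
    rw [hkey w ε hε]
    exact (isOpen_ball.preimage continuous_subtype_val).sdiff ((hfin w).isClosed)
end
end
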